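/- Let (I, e, N, ᾱ, d) be a fusion algebra datum. Then for all finitely supported f, ξ : I → ℂ one has ‖f · ξ‖₂ ≤ (∑_α |f(α)|·d(α)²)·‖ξ‖₂, where (f · ξ)(γ) := ∑_{α,β} f(α)·ξ(β)·N_{α,β}^γ (a finite sum) and ‖ξ‖₂ := (∑_γ |ξ(γ)|²·d(γ)²)^{1/2}. -/

import Mathlib

/-- A fusion algebra datum on an index set `I`: a unit `e`, structure constants
`N`, a conjugation `bar`, and a dimension function `d`, satisfying finiteness
of fusion, the unit rules, Frobenius reciprocity and multiplicativity of `d`. -/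
structure FusionData (I : Type*) where
  e : I
  N : I → I → I → ℕ
  bar : I → I
  d : I → ℝ
  N_fin : ∀ α β, (Function.support (N α β)).Finite
  bar_bar : ∀ α, bar (bar α) = α
  bar_e : bar e = e
  one_le_d : ∀ α, 1 ≤ d α
  d_bar : ∀ α, d (bar α) = d α
  N_unit_right : ∀ α, N α e α = 1
  N_unit_right' : ∀ α γ, γ ≠ α → N α e γ = 0
  N_unit_left : ∀ α, N e α α = 1
  N_unit_left' : ∀ α γ, γ ≠ α → N e α γ = 0
  frob₁ : ∀ α β γ, N α β γ = N (bar α) γ β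
  frob₂ : ∀ α β γ, N α β γ = N γ (bar β) α
  d_mul : ∀ α β, d α * d β = ∑ᶠ γ, (N α β γ : ℝ) * d γ

/-- A length function on a fusion algebra datum. -/
structure IsLength {I : Type*} (F : FusionData I) (ℓ : I → ℝ) : Prop where
  nonneg : ∀ α, 0 ≤ ℓ α
  map_e : ℓ F.e = 0
  map_bar : ∀ α, ℓ (F.bar α) = ℓ α
  subadd : ∀ α β γ, F.N α β γ ≠ 0 → ℓ γ ≤ ℓ α + ℓ β

/-- A length function is proper if balls are finite and only `e` has length 0. -/
def IsProperLength {I : Type*} (F : FusionData I) (ℓ : I → ℝ) : Prop :=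
  (∀ R : ℝ, 0 ≤ R → {α : I | ℓ α ≤ R}.Finite) ∧ ∀ α, ℓ α = 0 → α = F.e

/-- The fusion product `(f · ξ)(γ) = ∑_{α,β} f(α) ξ(β) N_{α,β}^γ`. -/
noncomputable def fmul {I : Type*} (F : FusionData I) (f ξ : I → ℂ) : I → ℂ :=
  fun γ => ∑ᶠ α, ∑ᶠ β, f α * ξ β * (F.N α β γ : ℂ)

/-- The weighted `ℓ²`-norm `‖ξ‖₂ = (∑_γ |ξ(γ)|² d(γ)²)^{1/2}`. -/
noncomputable def norm2 {I : Type*} (F : FusionData I) (ξ : I → ℂ) : ℝ :=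
  Real.sqrt (∑ᶠ γ, ‖ξ γ‖ ^ 2 * F.d γ ^ 2)


/-!
Write `f · ξ = ∑_α f(α) λ(α)ξ` with `(λ(α)ξ)(γ) = ∑_β ξ(β) N_{α,β}^γ`; by the triangle inequality it
suffices to show `‖λ(α)ξ‖₂ ≤ d(α)² ‖ξ‖₂`. Cauchy–Schwarz with weights `N_{α,β}^γ d(β)` gives
`|(λ(α)ξ)(γ)|² ≤ d(α) d(γ) ∑_β N_{α,β}^γ |ξ(β)|² / d(β)`, because Frobenius reciprocity turns
`∑_β N_{α,β}^γ d(β)` into `d(ᾱ) d(γ) = d(α) d(γ)`. Summing against `d(γ)²` leaves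
`∑_γ N_{α,β}^γ d(γ)³ ≤ (d(α) d(β))³`, which holds because `N_{α,β}^γ ≠ 0` forces
`d(γ) ≤ d(α) d(β)` by multiplicativity of `d`.
-/

open Function Finset

theorem Finset.sum_le_finsum {ι M : Type*} [AddCommMonoid M] [PartialOrder M]
    [IsOrderedAddMonoid M] {f : ι → M} (s : Finset ι) (hf : HasFiniteSupport f)
    (h : ∀ i, 0 ≤ f i) : ∑ i ∈ s, f i ≤ ∑ᶠ i, f i := by
  classical
  rw [finsum_eq_sum_of_support_toFinset_subset f hf subset_union_right]
  exact sum_le_sum_of_subset_of_nonneg subset_union_left fun i _ _ => h i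

namespace FusionData

variable {I : Type*} (F : FusionData I)

theorem d_pos (α : I) : 0 < F.d α :=
  one_pos.trans_le (F.one_le_d α)

theorem sum_N_mul_d_le (α β : I) (s : Finset I) :
    ∑ γ ∈ s, (F.N α β γ : ℝ) * F.d γ ≤ F.d α * F.d β := by
  have hfin : HasFiniteSupport fun γ => (F.N α β γ : ℝ) * F.d γ :=
    (F.N_fin α β).subset fun _ hγ => Nat.cast_ne_zero.mp (left_ne_zero_of_mul hγ)
  rw [F.d_mul]
  exact s.sum_le_finsum hfin fun γ => mul_nonneg (Nat.cast_nonneg _) (F.d_pos γ).le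

theorem sum_N_mul_d_snd_le (α γ : I) (s : Finset I) :
    ∑ β ∈ s, (F.N α β γ : ℝ) * F.d β ≤ F.d α * F.d γ := by
  simpa only [← F.frob₁, F.d_bar] using F.sum_N_mul_d_le (F.bar α) γ s

theorem d_le_mul_of_N_ne_zero {α β γ : I} (h : F.N α β γ ≠ 0) : F.d γ ≤ F.d α * F.d β :=
  calc F.d γ ≤ F.N α β γ * F.d γ :=
        le_mul_of_one_le_left (F.d_pos γ).le (by exact_mod_cast Nat.one_le_iff_ne_zero.2 h)
    _ = ∑ γ' ∈ {γ}, (F.N α β γ' : ℝ) * F.d γ' := by rw [sum_singleton]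
    _ ≤ F.d α * F.d β := F.sum_N_mul_d_le α β {γ}

theorem sum_N_mul_d_pow_le (α β : I) (s : Finset I) (k : ℕ) :
    ∑ γ ∈ s, (F.N α β γ : ℝ) * F.d γ ^ (k + 1) ≤ (F.d α * F.d β) ^ (k + 1) :=
  calc ∑ γ ∈ s, (F.N α β γ : ℝ) * F.d γ ^ (k + 1)
        ≤ ∑ γ ∈ s, (F.N α β γ : ℝ) * F.d γ * (F.d α * F.d β) ^ k := by
          refine sum_le_sum fun γ _ => ?_
          rcases eq_or_ne (F.N α β γ) 0 with h | h
          · simp [h]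
          rw [pow_succ', ← mul_assoc]
          have := F.d_pos γ
          gcongr
          exact F.d_le_mul_of_N_ne_zero h
    _ = (∑ γ ∈ s, (F.N α β γ : ℝ) * F.d γ) * (F.d α * F.d β) ^ k := (sum_mul ..).symm
    _ ≤ (F.d α * F.d β) * (F.d α * F.d β) ^ k := by
          have := F.d_pos α
          have := F.d_pos β
          gcongr
          exact F.sum_N_mul_d_le α β s
    _ = (F.d α * F.d β) ^ (k + 1) := (pow_succ' ..).symm

theorem sq_sum_mul_N_le (α γ : I) (x : I → ℝ) (T : Finset I) :
    (∑ β ∈ T, x β * F.N α β γ) ^ 2 ≤ F.d α * F.d γ * ∑ β ∈ T, F.N α β γ * x β ^ 2 / F.d β :=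
  calc (∑ β ∈ T, x β * F.N α β γ) ^ 2
        ≤ (∑ β ∈ T, (F.N α β γ : ℝ) * F.d β) * ∑ β ∈ T, F.N α β γ * x β ^ 2 / F.d β := by
          refine sum_sq_le_sum_mul_sum_of_sq_le_mul T
            (fun β _ => mul_nonneg (Nat.cast_nonneg _) (F.d_pos β).le)
            (fun β _ => div_nonneg (by positivity) (F.d_pos β).le) fun β _ => le_of_eq ?_
          have := (F.d_pos β).ne'
          field_simp
    _ ≤ F.d α * F.d γ * ∑ β ∈ T, F.N α β γ * x β ^ 2 / F.d β := by
          gcongr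
          · exact sum_nonneg fun β _ => div_nonneg (by positivity) (F.d_pos β).le
          · exact F.sum_N_mul_d_snd_le α γ T

theorem sum_sq_sum_mul_N_le (α : I) (x : I → ℝ) (T U : Finset I) :
    ∑ γ ∈ U, (∑ β ∈ T, x β * F.N α β γ) ^ 2 * F.d γ ^ 2 ≤
      (F.d α ^ 2) ^ 2 * ∑ β ∈ T, x β ^ 2 * F.d β ^ 2 :=
  calc ∑ γ ∈ U, (∑ β ∈ T, x β * F.N α β γ) ^ 2 * F.d γ ^ 2
        ≤ ∑ γ ∈ U, F.d α * F.d γ * (∑ β ∈ T, F.N α β γ * x β ^ 2 / F.d β) * F.d γ ^ 2 :=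
          sum_le_sum fun γ _ => by gcongr; exact F.sq_sum_mul_N_le α γ x T
    _ = F.d α * ∑ β ∈ T, x β ^ 2 / F.d β * ∑ γ ∈ U, (F.N α β γ : ℝ) * F.d γ ^ 3 := by
          simp_rw [mul_sum, sum_mul]
          rw [sum_comm]
          refine sum_congr rfl fun β _ => sum_congr rfl fun γ _ => ?_
          ring
    _ ≤ F.d α * ∑ β ∈ T, x β ^ 2 / F.d β * (F.d α * F.d β) ^ 3 := by
          have := F.d_pos α
          gcongr with β
          · exact div_nonneg (sq_nonneg _) (F.d_pos β).le
          · exact F.sum_N_mul_d_pow_le α β U 2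
    _ = (F.d α ^ 2) ^ 2 * ∑ β ∈ T, x β ^ 2 * F.d β ^ 2 := by
          rw [mul_sum, mul_sum]
          refine sum_congr rfl fun β _ => ?_
          have := (F.d_pos β).ne'
          field_simp

noncomputable def leftMul (α : I) (ξ : I → ℂ) : I → ℂ :=
  fun γ => ∑ᶠ β, ξ β * F.N α β γ

theorem leftMul_eq_sum {ξ : I → ℂ} {T : Finset I} (hT : support ξ ⊆ T) (α γ : I) :
    F.leftMul α ξ γ = ∑ β ∈ T, ξ β * F.N α β γ :=
  finsum_eq_sum_of_support_subset _ ((support_mul_subset_left _ _).trans hT)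

theorem hasFiniteSupport_leftMul {ξ : I → ℂ} (hξ : (support ξ).Finite) (α : I) :
    HasFiniteSupport (F.leftMul α ξ) := by
  classical
  refine (hξ.toFinset.finite_toSet.biUnion fun β _ => F.N_fin α β).subset fun γ hγ => ?_
  rw [mem_support, F.leftMul_eq_sum hξ.coe_toFinset.superset α γ] at hγ
  obtain ⟨β, hβ, hN⟩ := exists_ne_zero_of_sum_ne_zero hγ
  exact Set.mem_biUnion hβ (Nat.cast_ne_zero.mp (right_ne_zero_of_mul hN))

theorem fmul_eq_sum_smul_leftMul {f : I → ℂ} {S : Finset I} (hS : support f ⊆ S) (ξ : I → ℂ) :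
    fmul F f ξ = ∑ α ∈ S, f α • F.leftMul α ξ := by
  ext γ
  have hsupp : support (fun α => f α * F.leftMul α ξ γ) ⊆ S :=
    (support_mul_subset_left _ _).trans hS
  simp only [fmul, leftMul, Finset.sum_apply, Pi.smul_apply, smul_eq_mul, mul_assoc, ← mul_finsum]
  exact finsum_eq_sum_of_support_subset _ hsupp

theorem support_fmul_finite {f ξ : I → ℂ} (hf : (support f).Finite) (hξ : (support ξ).Finite) :
    (support (fmul F f ξ)).Finite := by
  classical
  refine (hf.toFinset.finite_toSet.biUnion fun α _ => F.hasFiniteSupport_leftMul hξ α).subset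
    fun γ hγ => ?_
  rw [mem_support, F.fmul_eq_sum_smul_leftMul hf.coe_toFinset.superset, Finset.sum_apply] at hγ
  obtain ⟨α, hα, h⟩ := exists_ne_zero_of_sum_ne_zero hγ
  exact Set.mem_biUnion hα (right_ne_zero_of_mul h)

-- Isometric on functions supported in `U`; it turns Minkowski's inequality for `norm2` into the
-- triangle inequality of `EuclideanSpace`.
noncomputable def weightedEmbedding (U : Finset I) : (I → ℂ) →ₗ[ℂ] EuclideanSpace ℂ U where
  toFun h := WithLp.toLp 2 fun γ => h γ * F.d γ
  map_add' _ _ := by ext; simp [add_mul]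
  map_smul' _ _ := by ext; simp [mul_assoc]

theorem norm_weightedEmbedding (U : Finset I) (h : I → ℂ) :
    ‖F.weightedEmbedding U h‖ = √(∑ γ ∈ U, ‖h γ‖ ^ 2 * F.d γ ^ 2) := by
  rw [EuclideanSpace.norm_eq, ← sum_coe_sort U]
  congr 1
  refine sum_congr rfl fun γ _ => ?_
  simp [weightedEmbedding, mul_pow, abs_of_pos (F.d_pos γ)]

theorem norm2_eq_sqrt_sum {h : I → ℂ} {U : Finset I} (hU : support h ⊆ U) :
    norm2 F h = √(∑ γ ∈ U, ‖h γ‖ ^ 2 * F.d γ ^ 2) := by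
  rw [norm2, finsum_eq_sum_of_support_subset]
  exact fun γ hγ => hU fun h0 => hγ (by simp [h0])

theorem norm_weightedEmbedding_leftMul_le {ξ : I → ℂ} (hξ : (support ξ).Finite)
    (U : Finset I) (α : I) :
    ‖F.weightedEmbedding U (F.leftMul α ξ)‖ ≤ F.d α ^ 2 * norm2 F ξ := by
  have hT : support ξ ⊆ hξ.toFinset := hξ.coe_toFinset.superset
  have hpointwise : ∀ γ, ‖F.leftMul α ξ γ‖ ≤ ∑ β ∈ hξ.toFinset, ‖ξ β‖ * F.N α β γ := fun γ => by
    rw [F.leftMul_eq_sum hT]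
    exact (norm_sum_le _ _).trans_eq (sum_congr rfl fun β _ => by simp)
  rw [F.norm_weightedEmbedding, F.norm2_eq_sqrt_sum hT,
    ← Real.sqrt_sq (by positivity : 0 ≤ F.d α ^ 2), ← Real.sqrt_mul (by positivity)]
  refine Real.sqrt_le_sqrt (le_trans (sum_le_sum fun γ _ => ?_) (F.sum_sq_sum_mul_N_le α _ _ U))
  gcongr
  exact hpointwise γ

end FusionData

/-- The `ℓ¹`-type bound
`‖f · ξ‖₂ ≤ (∑_α |f(α)| d(α)²) ‖ξ‖₂` for finitely supported `f, ξ : I → ℂ`. -/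
theorem stmt_7 {I : Type*} (F : FusionData I) (f ξ : I → ℂ)
    (hf : (Function.support f).Finite) (hξ : (Function.support ξ).Finite) :
    norm2 F (fmul F f ξ) ≤ (∑ᶠ α, ‖f α‖ * F.d α ^ 2) * norm2 F ξ := by
  have hS : support f ⊆ hf.toFinset := hf.coe_toFinset.superset
  obtain ⟨U, hU⟩ : ∃ U : Finset I, support (fmul F f ξ) ⊆ U :=
    ⟨_, (F.support_fmul_finite hf hξ).coe_toFinset.superset⟩
  rw [F.norm2_eq_sqrt_sum hU, ← F.norm_weightedEmbedding, F.fmul_eq_sum_smul_leftMul hS, map_sum,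
    finsum_eq_sum_of_support_subset _ fun α hα => hS fun h0 => hα (by simp [h0]), sum_mul]
  refine (norm_sum_le _ _).trans (sum_le_sum fun α _ => ?_)
  rw [map_smul, norm_smul, mul_assoc]
  gcongr
  exact F.norm_weightedEmbedding_leftMul_le hξ _ α
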